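/- arXiv:math/0009036 — 5 statements merged into one kernel-verified Lean document; each statement's English description precedes it below -/
import Mathlib

section
/- Euler's pentagonal number theorem: in the ring of formal power series in q with integer coefficients, the infinite product (q)_∞ = ∏_{k=1}^∞ (1 − q^k) equals 1 + Σ_{r=1}^∞ (−1)^r (q^{r(3r−1)/2} + q^{r(3r+1)/2}). -/
open PowerSeries Finset

/-- The finite product `(q)_n = ∏_{k=1}^n (1 - q^k)` in `ℤ⟦q⟧`. -/
noncomputable def qPoch (n : ℕ) : PowerSeries ℤ :=
  ∏ k ∈ Finset.range n, (1 - (PowerSeries.X : PowerSeries ℤ) ^ (k + 1))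

/-- The infinite product `(q)_∞ = ∏_{k=1}^∞ (1 - q^k)` in `ℤ⟦q⟧`: its coefficient of
`q^N` is determined by the finite product `∏_{k=1}^N (1 - q^k)`, since the remaining
factors only contribute in degrees `> N`. -/
noncomputable def eulerProd : PowerSeries ℤ :=
  PowerSeries.mk fun N => PowerSeries.coeff N (qPoch N)

/-- The series `Σ_{r=1}^∞ (-1)^r (q^{r(3r-1)/2} + q^{r(3r+1)/2})`, defined
coefficient-wise: only the terms with `r ≤ N` can contribute to the coefficient of
`q^N` (since `r(3r∓1)/2 ≥ r` for `r ≥ 1`). -/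
noncomputable def pentagonalSeries : PowerSeries ℤ :=
  PowerSeries.mk fun N => ∑ r ∈ Finset.Icc 1 N,
    (-1 : ℤ) ^ r * ((if 2 * N = 3 * r * r - r then 1 else 0) +
                    (if 2 * N = 3 * r * r + r then 1 else 0))

/-!
Mathlib's pentagonal number theorem `coeff_prod_one_sub_X_pow_eventually_eq` says that, for `s`
large enough, `∏_{n ∈ s} (1 - q^(n+1))` has the coefficients of `PowerSeries.pentagonalSeries`,
which has coefficient `(-1)^k` at `q ^ pentagonal k`, where `pentagonal k = k(3k-1)/2` for
`k : ℤ`. The coefficient of `q^N` only sees the factors with `n < N`, the others being `1`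
modulo `q^(N+1)`. The exponents `r(3r∓1)/2` are `pentagonal (±r)` and `pentagonal` is injective,
so each coefficient of `1 + Σ_{r ≥ 1} …` has at most one nonzero term, of sign `(-1)^k`.
-/

theorem pentagonal_zero : pentagonal 0 = 0 := rfl

theorem natAbs_le_pentagonal (k : ℤ) : k.natAbs ≤ pentagonal k := by
  obtain ⟨n, rfl | rfl⟩ := Int.eq_nat_or_neg k
  · have h := two_mul_natCast_pentagonal n
    rw [Int.natAbs_natCast]; zify; nlinarith
  · have h := two_mul_natCast_pentagonal_neg n
    rw [Int.natAbs_neg, Int.natAbs_natCast]; zify; nlinarith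

theorem two_mul_eq_iff_eq_pentagonal (N r : ℕ) : 2 * N = 3 * r * r - r ↔ N = pentagonal r := by
  have h := two_mul_natCast_pentagonal r
  have hr : r ≤ 3 * r * r := by nlinarith
  constructor <;> intro h' <;> zify [hr] at * <;> nlinarith

theorem two_mul_eq_iff_eq_pentagonal_neg (N r : ℕ) :
    2 * N = 3 * r * r + r ↔ N = pentagonal (-r) := by
  have h := two_mul_natCast_pentagonal_neg r
  constructor <;> intro h' <;> zify at * <;> nlinarith

theorem sum_Icc_pentagonal_eq_negOnePow (k : ℤ) :
    ∑ r ∈ Icc 1 (pentagonal k), (-1 : ℤ) ^ r *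
      ((if pentagonal k = pentagonal r then 1 else 0) +
        if pentagonal k = pentagonal (-r) then 1 else 0) =
      if k = 0 then 0 else (k.negOnePow : ℤ) := by
  have hterm : ∀ r ∈ Icc 1 (pentagonal k), (-1 : ℤ) ^ r *
      ((if pentagonal k = pentagonal r then 1 else 0) +
        if pentagonal k = pentagonal (-r) then 1 else 0) =
      if k.natAbs = r then (k.negOnePow : ℤ) else 0 := by
    intro r hr
    rw [mem_Icc] at hr
    obtain ⟨n, rfl | rfl⟩ := Int.eq_nat_or_neg k
    · have : (n : ℤ) ≠ -r := by omega
      simp +contextual [this, Int.coe_negOnePow_natCast, eq_comm]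
    · simp +contextual [Int.coe_negOnePow_natCast, Int.negOnePow_neg, eq_comm,
        Nat.one_le_iff_ne_zero.mp hr.1]
  rw [sum_congr rfl hterm, sum_ite_eq]
  simp [natAbs_le_pentagonal, Nat.one_le_iff_ne_zero]

theorem one_add_pentagonalSeries :
    1 + _root_.pentagonalSeries = PowerSeries.pentagonalSeries ℤ := by
  ext N
  simp only [map_add, coeff_one, _root_.pentagonalSeries, coeff_mk, two_mul_eq_iff_eq_pentagonal,
    two_mul_eq_iff_eq_pentagonal_neg]
  by_cases hN : N ∈ Set.range pentagonal
  · obtain ⟨k, rfl⟩ := hN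
    rw [sum_Icc_pentagonal_eq_negOnePow, coeff_pentagonalSeries_pentagonal, ← pentagonal_zero]
    by_cases hk : k = 0
    · simp [hk]
    · simp only [pentagonal_inj, hk, if_false, zero_add, Int.cast_id]
  · have hne : ∀ k, N ≠ pentagonal k := fun k h => hN ⟨k, h.symm⟩
    rw [coeff_pentagonalSeries_eq_zero ℤ hN, ← pentagonal_zero]
    simp [hne]

theorem coeff_prod_one_sub_X_pow_of_range_subset {R : Type*} [CommRing R]
    {N : ℕ} {s : Finset ℕ} (hs : range N ⊆ s) :
    coeff N (∏ n ∈ s, (1 - X ^ (n + 1) : R⟦X⟧)) =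
      coeff N (∏ n ∈ range N, (1 - X ^ (n + 1))) := by
  nontriviality R
  rw [← prod_sdiff hs, mul_comm, coeff_mul_prod_one_sub_of_lt_order]
  intro n hn
  have hNn : N ≤ n := by simpa using (mem_sdiff.mp hn).2
  rw [order_X_pow]
  exact_mod_cast Nat.lt_succ_of_le hNn

theorem coeff_eulerProd (N : ℕ) :
    coeff N eulerProd = coeff N (PowerSeries.pentagonalSeries ℤ) := by
  obtain ⟨s, hs, hrange⟩ :=
    ((coeff_prod_one_sub_X_pow_eventually_eq ℤ N).and
      (Filter.eventually_ge_atTop (range N))).exists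
  rw [eulerProd, coeff_mk, qPoch, ← coeff_prod_one_sub_X_pow_of_range_subset hrange, hs]

/-- Euler's pentagonal number theorem:
`(q)_∞ = 1 + Σ_{r=1}^∞ (-1)^r (q^{r(3r-1)/2} + q^{r(3r+1)/2})`. -/
theorem pentagonal_number_theorem : eulerProd = 1 + _root_.pentagonalSeries := by
  ext N
  rw [coeff_eulerProd, one_add_pentagonalSeries]
end

section
/- Franklin's theorem: for every nonnegative integer N, let d_e(N) (respectively d_o(N)) be the number of partitions of N into an even (respectively odd) number of distinct parts. Then d_e(N) − d_o(N) = (−1)^r if N = r(3r−1)/2 or N = r(3r+1)/2 for some positive integer r, and d_e(N) − d_o(N) = 0 otherwise (for N ≥ 1; for N = 0 the difference is 1, coming from the empty partition). -/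
open Finset

/-- The partitions of `N` into distinct parts, encoded as finsets of positive
integers summing to `N` (a finite strictly decreasing sequence of positive integers
is the same thing as a finite set of positive integers). All parts are at most `N`,
so every such partition is a subset of `{1, …, N}`. -/
def distinctPartitions (N : ℕ) : Finset (Finset ℕ) :=
  (Finset.Icc 1 N).powerset.filter fun s => s.sum id = N

/-- `d_e(N)`: the number of partitions of `N` into an even number of distinct parts. -/
def dEven (N : ℕ) : ℕ := ((distinctPartitions N).filter fun s => Even s.card).card

/-- `d_o(N)`: the number of partitions of `N` into an odd number of distinct parts. -/
def dOdd (N : ℕ) : ℕ := ((distinctPartitions N).filter fun s => Odd s.card).card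

/-!
Expanding `∏_{k ≤ M} (1 - X^k)` shows that its coefficient of `X^N`, for `M ≥ N`, is the signed
count `d_e(N) - d_o(N)` of partitions of `N` into distinct parts. By Euler's pentagonal number
theorem (`PowerSeries.coeff_prod_one_sub_X_pow_eventually_eq`) this coefficient is `(-1)^k` when
`N = k(3k-1)/2` for an integer `k`, and `0` otherwise.
-/

open PowerSeries

theorem PowerSeries.coeff_prod_one_sub_X_pow {R : Type*} [CommRing R] (T : Finset ℕ) (N : ℕ) :
    coeff N (∏ k ∈ T, (1 - X ^ k) : R⟦X⟧) = ∑ t ∈ T.powerset with t.sum id = N, (-1) ^ #t := by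
  have hterm (t : Finset ℕ) : ∏ k ∈ t, (-X ^ k : R⟦X⟧) = C ((-1) ^ #t) * X ^ t.sum id := by
    rw [prod_neg, prod_pow_eq_pow_sum, map_pow, map_neg, map_one]
    rfl
  simp_rw [sub_eq_add_neg, prod_one_add, hterm, map_sum, coeff_C_mul_X_pow, sum_filter, eq_comm]

theorem filter_powerset_Icc_sum_eq_distinctPartitions {M N : ℕ} (h : N ≤ M) :
    {t ∈ (Icc 1 M).powerset | t.sum id = N} = distinctPartitions N := by
  ext t
  simp only [distinctPartitions, mem_filter, mem_powerset, and_congr_left_iff]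
  rintro rfl
  refine ⟨fun ht x hx => ?_, fun ht => ht.trans (Icc_subset_Icc_right h)⟩
  have := single_le_sum (f := id) (fun _ _ => Nat.zero_le _) hx
  grind

theorem sum_neg_one_pow_card_eq_card_even_sub_card_odd {α : Type*} (S : Finset (Finset α)) :
    ∑ s ∈ S, (-1 : ℤ) ^ #s = #{s ∈ S | Even #s} - #{s ∈ S | Odd #s} := by
  have heven : ∑ s ∈ S with Even #s, (-1 : ℤ) ^ #s = #{s ∈ S | Even #s} := by
    rw [sum_congr rfl fun s hs => (mem_filter.1 hs).2.neg_one_pow]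
    simp
  have hodd : ∑ s ∈ S with Odd #s, (-1 : ℤ) ^ #s = -#{s ∈ S | Odd #s} := by
    rw [sum_congr rfl fun s hs => (mem_filter.1 hs).2.neg_one_pow]
    simp
  simp_rw [← sum_filter_add_sum_filter_not S (fun s => Even #s), Nat.not_even_iff_odd, heven, hodd,
    sub_eq_add_neg]

theorem dEven_sub_dOdd_eq_coeff_pentagonalSeries (N : ℕ) :
    (dEven N : ℤ) - dOdd N = coeff N (pentagonalSeries ℤ) := by
  obtain ⟨M, hM, hNM⟩ := ((Filter.tendsto_finset_range.eventually
    (coeff_prod_one_sub_X_pow_eventually_eq ℤ N)).and (Filter.eventually_ge_atTop N)).exists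
  have hIcc : ∏ n ∈ range M, (1 - X ^ (n + 1) : ℤ⟦X⟧) = ∏ k ∈ Icc 1 M, (1 - X ^ k) := by
    rw [← Ico_add_one_right_eq_Icc, prod_Ico_eq_prod_range]
    simp [add_comm]
  rw [← hM, hIcc, coeff_prod_one_sub_X_pow, filter_powerset_Icc_sum_eq_distinctPartitions hNM,
    sum_neg_one_pow_card_eq_card_even_sub_card_odd, dEven, dOdd]

theorem pentagonal_natCast_eq_iff (r N : ℕ) : pentagonal r = N ↔ 2 * N = 3 * r * r - r := by
  have h := two_mul_natCast_pentagonal r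
  have hr : r ≤ 3 * r * r := by nlinarith
  zify [hr]
  constructor <;> intro h' <;> nlinarith

theorem pentagonal_neg_natCast_eq_iff (r N : ℕ) :
    pentagonal (-r) = N ↔ 2 * N = 3 * r * r + r := by
  have h := two_mul_natCast_pentagonal_neg r
  zify
  constructor <;> intro h' <;> nlinarith

/-- Franklin's theorem: `d_e(N) - d_o(N) = (-1)^r` if `N = r(3r-1)/2` or
`N = r(3r+1)/2` for a positive integer `r` (stated as `2N = 3r² - r` or
`2N = 3r² + r`), `d_e(N) - d_o(N) = 0` for all other `N ≥ 1`, and the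
difference is `1` for `N = 0` (the empty partition). -/
theorem franklin :
    (∀ N r : ℕ, 0 < r → (2 * N = 3 * r * r - r ∨ 2 * N = 3 * r * r + r) →
      (dEven N : ℤ) - dOdd N = (-1) ^ r) ∧
    (∀ N : ℕ, 1 ≤ N →
      (∀ r : ℕ, 0 < r → ¬(2 * N = 3 * r * r - r ∨ 2 * N = 3 * r * r + r)) →
      (dEven N : ℤ) - dOdd N = 0) ∧
    ((dEven 0 : ℤ) - dOdd 0 = 1) := by
  refine ⟨?_, ?_, ?_⟩
  · rintro N r - (h | h)
    · rw [dEven_sub_dOdd_eq_coeff_pentagonalSeries, ← (pentagonal_natCast_eq_iff r N).2 h,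
        coeff_pentagonalSeries_pentagonal]
      simp
    · rw [dEven_sub_dOdd_eq_coeff_pentagonalSeries, ← (pentagonal_neg_natCast_eq_iff r N).2 h,
        coeff_pentagonalSeries_pentagonal]
      simp
  · intro N hN h
    rw [dEven_sub_dOdd_eq_coeff_pentagonalSeries, coeff_pentagonalSeries_eq_zero]
    rintro ⟨k, rfl⟩
    obtain ⟨r, rfl | rfl⟩ := Int.eq_nat_or_neg k
    · have hr : 0 < r := Nat.pos_of_ne_zero <| by rintro rfl; simp [pentagonal_def] at hN
      exact h r hr (.inl ((pentagonal_natCast_eq_iff r _).1 rfl))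
    · have hr : 0 < r := Nat.pos_of_ne_zero <| by rintro rfl; simp [pentagonal_def] at hN
      exact h r hr (.inr ((pentagonal_neg_natCast_eq_iff r _).1 rfl))
  · rw [dEven_sub_dOdd_eq_coeff_pentagonalSeries, ← (pentagonal_natCast_eq_iff 0 0).2 rfl,
      coeff_pentagonalSeries_pentagonal]
    simp
end

section
/- In the ring of formal power series in q with integer coefficients, Σ_{λ ∈ 𝒟} (−1)^{n_λ} (m_λ + n_λ) q^{N_λ} = Σ_{r=1}^∞ (−1)^r [(3r−1) q^{r(3r−1)/2} + 3r q^{r(3r+1)/2}]; equivalently, for every N ≥ 1, Σ_{λ ∈ 𝒟_N} (−1)^{n_λ} (m_λ + n_λ) equals (−1)^r (3r−1) if N = r(3r−1)/2 for a positive integer r, equals (−1)^r · 3r if N = r(3r+1)/2 for a positive integer r, and equals 0 otherwise. -/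
open Finset

/-- The signed sum `Σ_{λ ∈ 𝒟_N} (-1)^{n_λ} (m_λ + n_λ)`, where `n_λ = s.card` is the
number of parts and `m_λ = s.sup id` is the largest part. -/
def signedSumMN (N : ℕ) : ℤ :=
  ∑ s ∈ distinctPartitions N, (-1 : ℤ) ^ s.card * (((s.sup (id : ℕ → ℕ) : ℕ) : ℤ) + (s.card : ℤ))

/-!
Franklin's involution on partitions into distinct parts: if the smallest part `a` is at most the
length `t` of the run of consecutive parts starting at the largest part `m`, remove `a` and add one
to each of the `a` largest parts; otherwise subtract one from each part of that run and add a new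
part `t`. Each move changes `n` by one and `m` by one in the opposite direction, so it preserves
`m + n` and flips the sign `(-1)^n`. It is defined on every partition except `(2r-1, …, r)` and
`(2r, …, r+1)`, of sizes `r(3r-1)/2` and `r(3r+1)/2`, and these alone survive in the signed sum.
-/

lemma sup_id_mem {s : Finset ℕ} (hne : s.Nonempty) : s.sup id ∈ s := by
  simpa using sup_mem_of_nonempty (f := id) hne

lemma sup_id_Ico {a b : ℕ} (h : a < b) : (Ico a b).sup id = b - 1 :=
  sup_eq_of_isMaxOn (mem_Ico.2 ⟨by omega, by omega⟩) fun x hx => by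
    have := mem_Ico.1 hx
    show x ≤ b - 1
    omega

lemma mem_distinctPartitions {N : ℕ} {s : Finset ℕ} :
    s ∈ distinctPartitions N ↔ 0 ∉ s ∧ ∑ x ∈ s, x = N := by
  simp only [distinctPartitions, mem_filter, mem_powerset]
  constructor
  · rintro ⟨hsub, hsum⟩
    exact ⟨fun h => by simpa using hsub h, hsum⟩
  · rintro ⟨h0, rfl⟩
    refine ⟨fun x hx => mem_Icc.2 ⟨Nat.pos_of_ne_zero fun h => h0 (h ▸ hx), ?_⟩, rfl⟩
    exact single_le_sum (f := fun x => x) (fun _ _ => Nat.zero_le _) hx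

lemma nonempty_of_mem_distinctPartitions {N : ℕ} {s : Finset ℕ} (hN : 0 < N)
    (hs : s ∈ distinctPartitions N) : s.Nonempty := by
  rw [nonempty_iff_ne_empty]
  rintro rfl
  simp [mem_distinctPartitions] at hs
  omega

def signedWeight (s : Finset ℕ) : ℤ :=
  (-1 : ℤ) ^ s.card * (((s.sup (id : ℕ → ℕ) : ℕ) : ℤ) + (s.card : ℤ))

lemma signedSumMN_eq_sum_signedWeight (N : ℕ) :
    signedSumMN N = ∑ s ∈ distinctPartitions N, signedWeight s := rfl

lemma signedWeight_eq_neg {s t : Finset ℕ} (hcard : s.card = t.card + 1 ∨ t.card = s.card + 1)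
    (hsup : s.sup id + s.card = t.sup id + t.card) : signedWeight s = -signedWeight t := by
  have hsup' : ((s.sup id : ℕ) : ℤ) + s.card = t.sup id + t.card := by exact_mod_cast hsup
  unfold signedWeight
  rw [hsup']
  rcases hcard with h | h <;> rw [h, pow_succ] <;> ring

lemma signedWeight_Ico_self {r : ℕ} (hr : 0 < r) :
    signedWeight (Ico r (2 * r)) = (-1) ^ r * (3 * r - 1) := by
  rw [signedWeight, sup_id_Ico (by omega), Nat.card_Ico, show 2 * r - r = r by omega]
  have h : ((2 * r - 1 : ℕ) : ℤ) = 2 * r - 1 := by omega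
  rw [h]
  ring

lemma signedWeight_Ico_succ {r : ℕ} (hr : 0 < r) :
    signedWeight (Ico (r + 1) (2 * r + 1)) = (-1) ^ r * (3 * r) := by
  rw [signedWeight, sup_id_Ico (by omega), Nat.card_Ico, show 2 * r + 1 - (r + 1) = r by omega,
    Nat.add_sub_cancel]
  push_cast
  ring

lemma two_mul_sum_Ico_add (c r : ℕ) :
    2 * ∑ x ∈ Ico c (c + r), (x : ℤ) = r * (2 * c + r - 1) := by
  induction r with
  | zero => simp
  | succ r ih =>
    rw [← add_assoc, sum_Ico_succ_top (by omega)]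
    push_cast
    linear_combination ih

lemma sum_Ico_self_two_mul (r : ℕ) : ∑ x ∈ Ico r (2 * r), x = pentagonal r := by
  have h : 2 * ((∑ x ∈ Ico r (2 * r), x : ℕ) : ℤ) = 2 * pentagonal r := by
    rw [two_mul_natCast_pentagonal, two_mul r, Nat.cast_sum, two_mul_sum_Ico_add]
    ring
  exact_mod_cast (mul_right_inj' two_ne_zero).1 h

lemma sum_Ico_succ_two_mul_add_one (r : ℕ) :
    ∑ x ∈ Ico (r + 1) (2 * r + 1), x = pentagonal (-r) := by
  have h : 2 * ((∑ x ∈ Ico (r + 1) (2 * r + 1), x : ℕ) : ℤ) = 2 * pentagonal (-r) := by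
    rw [two_mul_natCast_pentagonal_neg, show 2 * r + 1 = r + 1 + r by ring, Nat.cast_sum,
      two_mul_sum_Ico_add]
    push_cast
    ring
  exact_mod_cast (mul_right_inj' two_ne_zero).1 h

lemma two_mul_eq_three_mul_mul_sub_iff {N r : ℕ} :
    2 * N = 3 * r * r - r ↔ N = pentagonal r := by
  have hr : r ≤ 3 * r * r := by nlinarith [Nat.le_mul_self r]
  have h : 3 * r * r - r = 2 * pentagonal r := by
    zify [hr]
    rw [two_mul_natCast_pentagonal]
    ring
  rw [h]
  omega

lemma two_mul_eq_three_mul_mul_add_iff {N r : ℕ} :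
    2 * N = 3 * r * r + r ↔ N = pentagonal (-r) := by
  have h : 3 * r * r + r = 2 * pentagonal (-r) := by
    zify
    rw [two_mul_natCast_pentagonal_neg]
    ring
  rw [h]
  omega

lemma pentagonal_natCast_pos {r : ℕ} (hr : 0 < r) : 0 < pentagonal r := by
  have h := two_mul_natCast_pentagonal r
  have hr' : (1 : ℤ) ≤ r := by exact_mod_cast hr
  have hpos : (0 : ℤ) < pentagonal r := by nlinarith
  exact_mod_cast hpos

lemma pentagonal_neg_natCast_pos {r : ℕ} (hr : 0 < r) : 0 < pentagonal (-r) :=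
  (pentagonal_natCast_pos hr).trans (pentagonal_lt_pentagonal_neg (by exact_mod_cast hr))

namespace Franklin

variable {s : Finset ℕ} {a b j x : ℕ}

noncomputable def smallestPart (s : Finset ℕ) : ℕ := sInf (s : Set ℕ)

/-- The length of the run of consecutive parts `m, m - 1, …` starting at the largest part `m`. -/
noncomputable def topRun (s : Finset ℕ) : ℕ := sInf {j | s.sup id - j ∉ s}

lemma smallestPart_le (hx : x ∈ s) : smallestPart s ≤ x := Nat.sInf_le hx

lemma smallestPart_mem (hne : s.Nonempty) : smallestPart s ∈ s :=
  Nat.sInf_mem (s := (s : Set ℕ)) (by simpa using hne)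

lemma smallestPart_eq (hx : x ∈ s) (h : ∀ y ∈ s, x ≤ y) : smallestPart s = x :=
  IsLeast.csInf_eq ⟨hx, h⟩

lemma smallestPart_pos (h0 : 0 ∉ s) (hne : s.Nonempty) : 0 < smallestPart s :=
  Nat.pos_of_ne_zero fun h => h0 (h ▸ smallestPart_mem hne)

lemma smallestPart_le_sup : smallestPart s ≤ s.sup id := by
  rcases s.eq_empty_or_nonempty with rfl | hne
  · simp [smallestPart]
  · exact smallestPart_le (sup_id_mem hne)

lemma smallestPart_Ico (h : a < b) : smallestPart (Ico a b) = a :=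
  smallestPart_eq (mem_Ico.2 ⟨le_rfl, h⟩) fun _ hy => (mem_Ico.1 hy).1

lemma sub_mem_of_lt_topRun (h : j < topRun s) : s.sup id - j ∈ s :=
  not_not.1 (Nat.notMem_of_lt_sInf h)

lemma topRun_le (h : s.sup id - j ∉ s) : topRun s ≤ j := Nat.sInf_le h

lemma sub_topRun_notMem (h0 : 0 ∉ s) : s.sup id - topRun s ∉ s :=
  Nat.sInf_mem (s := {j | s.sup id - j ∉ s}) ⟨s.sup id, by simpa using h0⟩

lemma le_topRun (h0 : 0 ∉ s) (h : ∀ i < j, s.sup id - i ∈ s) : j ≤ topRun s :=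
  not_lt.1 fun hlt => sub_topRun_notMem h0 (h _ hlt)

lemma topRun_pos (h0 : 0 ∉ s) (hne : s.Nonempty) : 0 < topRun s :=
  le_topRun h0 fun i hi => by simpa [Nat.lt_one_iff.1 hi] using sup_id_mem hne

lemma topRun_le_sup (h0 : 0 ∉ s) : topRun s ≤ s.sup id := topRun_le (by simpa using h0)

lemma topRun_Ico (ha : 0 < a) (h : a < b) : topRun (Ico a b) = b - a := by
  refine le_antisymm (topRun_le ?_) (le_topRun (by simp; omega) fun i hi => ?_) <;>
    simp only [sup_id_Ico h, mem_Ico] <;> omega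

lemma eq_Ico_of_sup_add_one_sub_topRun_le (h : s.sup id + 1 - topRun s ≤ smallestPart s) :
    s = Ico (smallestPart s) (s.sup id + 1) := by
  ext x
  refine ⟨fun hx => mem_Ico.2 ⟨smallestPart_le hx, Nat.lt_succ_of_le (le_sup (f := id) hx)⟩,
    fun hx => ?_⟩
  rw [mem_Ico] at hx
  have hmem := sub_mem_of_lt_topRun (s := s) (j := s.sup id - x) (by omega)
  rwa [Nat.sub_sub_self (by omega)] at hmem

/-- Remove the smallest part `a` and add one to each of the `a` largest parts: on the set of parts
this replaces `m + 1 - a` by `m + 1`. -/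
noncomputable def spreadSmallest (s : Finset ℕ) : Finset ℕ :=
  insert (s.sup id + 1) ((s.erase (smallestPart s)).erase (s.sup id + 1 - smallestPart s))

/-- Subtract one from each of the `t` parts of the top run and add a new part `t`: on the set of
parts this replaces `m` by `m - t` and adds `t`. -/
noncomputable def peelTopRun (s : Finset ℕ) : Finset ℕ :=
  insert (s.sup id - topRun s) (insert (topRun s) (s.erase (s.sup id)))

lemma mem_spreadSmallest : x ∈ spreadSmallest s ↔ x = s.sup id + 1 ∨
    x ≠ s.sup id + 1 - smallestPart s ∧ x ≠ smallestPart s ∧ x ∈ s := by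
  simp [spreadSmallest]

lemma mem_peelTopRun : x ∈ peelTopRun s ↔
    x = s.sup id - topRun s ∨ x = topRun s ∨ x ≠ s.sup id ∧ x ∈ s := by
  simp [peelTopRun]

lemma sup_add_one_notMem : s.sup id + 1 ∉ s := fun h => by
  have : s.sup id + 1 ≤ s.sup id := le_sup (f := id) h
  omega

lemma sup_add_one_sub_mem (hj : 0 < j) (h : j ≤ topRun s) : s.sup id + 1 - j ∈ s := by
  have hmem := sub_mem_of_lt_topRun (s := s) (j := j - 1) (by omega)
  rwa [show s.sup id - (j - 1) = s.sup id + 1 - j by omega] at hmem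

lemma card_spreadSmallest (h0 : 0 ∉ s) (hne : s.Nonempty) (hA : smallestPart s ≤ topRun s)
    (h2a : 2 * smallestPart s ≤ s.sup id) : (spreadSmallest s).card + 1 = s.card := by
  have ha := smallestPart_mem hne
  have hb : s.sup id + 1 - smallestPart s ∈ s.erase (smallestPart s) :=
    mem_erase.2 ⟨by omega, sup_add_one_sub_mem (smallestPart_pos h0 hne) hA⟩
  have hcard := card_pos.2 ⟨_, hb⟩
  rw [card_erase_of_mem ha] at hcard
  rw [spreadSmallest, card_insert_of_notMem fun h => sup_add_one_notMem (mem_of_mem_erase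
    (mem_of_mem_erase h)), card_erase_of_mem hb, card_erase_of_mem ha]
  omega

lemma sum_spreadSmallest (h0 : 0 ∉ s) (hne : s.Nonempty) (hA : smallestPart s ≤ topRun s)
    (h2a : 2 * smallestPart s ≤ s.sup id) : ∑ x ∈ spreadSmallest s, x = ∑ x ∈ s, x := by
  have hb : s.sup id + 1 - smallestPart s ∈ s.erase (smallestPart s) :=
    mem_erase.2 ⟨by omega, sup_add_one_sub_mem (smallestPart_pos h0 hne) hA⟩
  rw [spreadSmallest, sum_insert fun h => sup_add_one_notMem (mem_of_mem_erase
    (mem_of_mem_erase h)), ← add_sum_erase _ _ (smallestPart_mem hne), ← add_sum_erase _ _ hb]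
  omega

lemma sup_spreadSmallest : (spreadSmallest s).sup id = s.sup id + 1 :=
  sup_eq_of_isMaxOn (mem_insert_self _ _) fun y hy => show y ≤ s.sup id + 1 by
    rcases mem_spreadSmallest.1 hy with rfl | ⟨-, -, hy⟩
    · exact le_rfl
    · exact (le_sup (f := id) hy).trans (Nat.le_succ _)

lemma smallestPart_lt_smallestPart_spreadSmallest :
    smallestPart s < smallestPart (spreadSmallest s) := by
  rcases mem_spreadSmallest.1 (smallestPart_mem (insert_nonempty _ _)) with h | ⟨-, hne, hy⟩
  · rw [h]
    exact Nat.lt_succ_of_le smallestPart_le_sup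
  · exact lt_of_le_of_ne (smallestPart_le hy) (Ne.symm hne)

lemma topRun_spreadSmallest (h0 : 0 ∉ s) (hne : s.Nonempty) (hA : smallestPart s ≤ topRun s)
    (h2a : 2 * smallestPart s ≤ s.sup id) : topRun (spreadSmallest s) = smallestPart s := by
  have hpos := smallestPart_pos h0 hne
  refine le_antisymm (topRun_le ?_) (le_topRun ?_ fun i hi => ?_) <;>
    rw [mem_spreadSmallest] <;> try rw [sup_spreadSmallest]
  · exact fun h => h.elim (by omega) fun h => h.1 rfl
  · exact fun h => h.elim (by omega) fun h => h0 h.2.2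
  · rcases i with _ | i
    · exact .inl rfl
    refine .inr ⟨by omega, by omega, ?_⟩
    rw [show s.sup id + 1 - (i + 1) = s.sup id - i by omega]
    exact sub_mem_of_lt_topRun (by omega)

lemma peelTopRun_spreadSmallest (h0 : 0 ∉ s) (hne : s.Nonempty)
    (hA : smallestPart s ≤ topRun s) (h2a : 2 * smallestPart s ≤ s.sup id) :
    peelTopRun (spreadSmallest s) = s := by
  have ha := smallestPart_mem hne
  have hb := sup_add_one_sub_mem (smallestPart_pos h0 hne) hA
  rw [peelTopRun, sup_spreadSmallest, topRun_spreadSmallest h0 hne hA h2a, spreadSmallest,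
    erase_insert fun h => sup_add_one_notMem (mem_of_mem_erase (mem_of_mem_erase h)),
    erase_right_comm, insert_erase (mem_erase.2 ⟨by omega, ha⟩), insert_erase hb]

lemma topRun_notMem (hB : topRun s < smallestPart s) : topRun s ∉ s :=
  fun h => (smallestPart_le h).not_gt hB

lemma card_peelTopRun (h0 : 0 ∉ s) (hne : s.Nonempty) (hB : topRun s < smallestPart s)
    (h2t : 2 * topRun s < s.sup id) : (peelTopRun s).card = s.card + 1 := by
  have hcard := card_pos.2 hne
  rw [peelTopRun, card_insert_of_notMem, card_insert_of_notMem
    fun h => topRun_notMem hB (mem_of_mem_erase h), card_erase_of_mem (sup_id_mem hne)]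
  · omega
  · rw [mem_insert, not_or]
    exact ⟨by omega, fun h => sub_topRun_notMem h0 (mem_of_mem_erase h)⟩

lemma sum_peelTopRun (h0 : 0 ∉ s) (hne : s.Nonempty) (hB : topRun s < smallestPart s)
    (h2t : 2 * topRun s < s.sup id) : ∑ x ∈ peelTopRun s, x = ∑ x ∈ s, x := by
  rw [peelTopRun, sum_insert, sum_insert fun h => topRun_notMem hB (mem_of_mem_erase h),
    ← add_sum_erase _ _ (sup_id_mem hne)]
  · omega
  · rw [mem_insert, not_or]
    exact ⟨by omega, fun h => sub_topRun_notMem h0 (mem_of_mem_erase h)⟩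

lemma sup_peelTopRun (h0 : 0 ∉ s) (hne : s.Nonempty) (h2t : 2 * topRun s < s.sup id) :
    (peelTopRun s).sup id = s.sup id - 1 := by
  have ht := topRun_pos h0 hne
  refine sup_eq_of_isMaxOn ?_ fun y hy => show y ≤ s.sup id - 1 from ?_
  · rw [mem_peelTopRun]
    rcases Nat.lt_or_ge 1 (topRun s) with h | h
    · exact .inr (.inr ⟨by omega, sub_mem_of_lt_topRun h⟩)
    · exact .inl (by omega)
  · rcases mem_peelTopRun.1 hy with rfl | rfl | ⟨hym, hy⟩
    · omega
    · omega
    · have := le_sup (f := id) hy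
      simp only [id] at this
      omega

lemma smallestPart_peelTopRun (hB : topRun s < smallestPart s)
    (h2t : 2 * topRun s < s.sup id) : smallestPart (peelTopRun s) = topRun s :=
  smallestPart_eq (mem_peelTopRun.2 (.inr (.inl rfl))) fun y hy => by
    rcases mem_peelTopRun.1 hy with rfl | rfl | ⟨-, hy⟩
    · omega
    · exact le_rfl
    · exact hB.le.trans (smallestPart_le hy)

lemma topRun_le_topRun_peelTopRun (h0 : 0 ∉ s) (hne : s.Nonempty)
    (h2t : 2 * topRun s < s.sup id) : topRun s ≤ topRun (peelTopRun s) := by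
  have ht := topRun_pos h0 hne
  refine le_topRun (fun h => ?_) fun i hi => ?_
  · rcases mem_peelTopRun.1 h with h | h | ⟨-, h⟩
    · omega
    · omega
    · exact h0 h
  · rw [sup_peelTopRun h0 hne h2t, mem_peelTopRun]
    rcases Nat.lt_or_ge (i + 1) (topRun s) with h | h
    · refine .inr (.inr ⟨by omega, ?_⟩)
      rw [show s.sup id - 1 - i = s.sup id - (i + 1) by omega]
      exact sub_mem_of_lt_topRun h
    · exact .inl (by omega)

lemma spreadSmallest_peelTopRun (h0 : 0 ∉ s) (hne : s.Nonempty)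
    (hB : topRun s < smallestPart s) (h2t : 2 * topRun s < s.sup id) :
    spreadSmallest (peelTopRun s) = s := by
  have hq : s.sup id - topRun s ∉ s.erase (s.sup id) :=
    fun h => sub_topRun_notMem h0 (mem_of_mem_erase h)
  rw [spreadSmallest, sup_peelTopRun h0 hne h2t, smallestPart_peelTopRun hB h2t,
    Nat.sub_add_cancel (by omega), peelTopRun, insert_comm, erase_insert, erase_insert hq,
    insert_erase (sup_id_mem hne)]
  rw [mem_insert, not_or]
  exact ⟨by omega, fun h => topRun_notMem hB (mem_of_mem_erase h)⟩

/-- `2a ≤ m` keeps the smallest part `a` below the `a` largest parts, and `2t < m` keeps the new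
part `t` below the lowered run. -/
def Admissible (s : Finset ℕ) : Prop :=
  smallestPart s ≤ topRun s ∧ 2 * smallestPart s ≤ s.sup id ∨
    topRun s < smallestPart s ∧ 2 * topRun s < s.sup id

noncomputable instance : DecidablePred Admissible := fun _ => inferInstanceAs (Decidable (_ ∨ _))

noncomputable def franklin (s : Finset ℕ) : Finset ℕ :=
  if smallestPart s ≤ topRun s then spreadSmallest s else peelTopRun s

lemma franklin_of_le (h : smallestPart s ≤ topRun s) : franklin s = spreadSmallest s := if_pos h

lemma franklin_of_lt (h : topRun s < smallestPart s) : franklin s = peelTopRun s :=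
  if_neg h.not_ge

lemma zero_notMem_franklin (h0 : 0 ∉ s) (hne : s.Nonempty) (hs : Admissible s) :
    0 ∉ franklin s := by
  rcases hs with ⟨hA, -⟩ | ⟨hB, h2t⟩
  · rw [franklin_of_le hA, mem_spreadSmallest]
    exact fun h => h.elim (by omega) fun h => h0 h.2.2
  · have ht := topRun_pos h0 hne
    rw [franklin_of_lt hB, mem_peelTopRun]
    exact fun h => h.elim (by omega) fun h => h.elim (by omega) fun h => h0 h.2

lemma sum_franklin (h0 : 0 ∉ s) (hne : s.Nonempty) (hs : Admissible s) :
    ∑ x ∈ franklin s, x = ∑ x ∈ s, x := by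
  rcases hs with ⟨hA, h2a⟩ | ⟨hB, h2t⟩
  · rw [franklin_of_le hA, sum_spreadSmallest h0 hne hA h2a]
  · rw [franklin_of_lt hB, sum_peelTopRun h0 hne hB h2t]

lemma admissible_franklin (h0 : 0 ∉ s) (hne : s.Nonempty) (hs : Admissible s) :
    Admissible (franklin s) := by
  rcases hs with ⟨hA, h2a⟩ | ⟨hB, h2t⟩
  · rw [franklin_of_le hA]
    refine .inr ⟨?_, ?_⟩ <;> rw [topRun_spreadSmallest h0 hne hA h2a]
    · exact smallestPart_lt_smallestPart_spreadSmallest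
    · rw [sup_spreadSmallest]
      omega
  · rw [franklin_of_lt hB]
    refine .inl ⟨?_, ?_⟩ <;> rw [smallestPart_peelTopRun hB h2t]
    · exact topRun_le_topRun_peelTopRun h0 hne h2t
    · rw [sup_peelTopRun h0 hne h2t]
      omega

lemma franklin_franklin (h0 : 0 ∉ s) (hne : s.Nonempty) (hs : Admissible s) :
    franklin (franklin s) = s := by
  rcases hs with ⟨hA, h2a⟩ | ⟨hB, h2t⟩
  · have h := smallestPart_lt_smallestPart_spreadSmallest (s := s)
    rw [← topRun_spreadSmallest h0 hne hA h2a] at h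
    rw [franklin_of_le hA, franklin_of_lt h, peelTopRun_spreadSmallest h0 hne hA h2a]
  · have h := topRun_le_topRun_peelTopRun h0 hne h2t
    rw [← smallestPart_peelTopRun hB h2t] at h
    rw [franklin_of_lt hB, franklin_of_le h, spreadSmallest_peelTopRun h0 hne hB h2t]

lemma signedWeight_franklin (h0 : 0 ∉ s) (hne : s.Nonempty) (hs : Admissible s) :
    signedWeight (franklin s) = -signedWeight s := by
  rcases hs with ⟨hA, h2a⟩ | ⟨hB, h2t⟩
  · have hcard := card_spreadSmallest h0 hne hA h2a
    rw [franklin_of_le hA]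
    exact signedWeight_eq_neg (.inr hcard.symm) (by rw [sup_spreadSmallest]; omega)
  · have hcard := card_peelTopRun h0 hne hB h2t
    rw [franklin_of_lt hB]
    exact signedWeight_eq_neg (.inl hcard) (by rw [sup_peelTopRun h0 hne h2t]; omega)

lemma sum_signedWeight_admissible {N : ℕ} (hN : 0 < N) :
    ∑ s ∈ distinctPartitions N with Admissible s, signedWeight s = 0 := by
  have key (s) (hs : s ∈ (distinctPartitions N).filter Admissible) :
      0 ∉ s ∧ s.Nonempty ∧ Admissible s := by
    obtain ⟨hs, hadm⟩ := mem_filter.1 hs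
    exact ⟨(mem_distinctPartitions.1 hs).1, nonempty_of_mem_distinctPartitions hN hs, hadm⟩
  refine sum_involution (fun s _ => franklin s) (fun s hs => ?_) (fun s hs hw h => ?_)
    (fun s hs => ?_) fun s hs => ?_ <;> obtain ⟨h0, hne, hadm⟩ := key s hs
  · rw [signedWeight_franklin h0 hne hadm, add_neg_cancel]
  · have hneg := signedWeight_franklin h0 hne hadm
    rw [h] at hneg
    omega
  · obtain ⟨hs, -⟩ := mem_filter.1 hs
    refine mem_filter.2 ⟨mem_distinctPartitions.2 ⟨zero_notMem_franklin h0 hne hadm, ?_⟩,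
      admissible_franklin h0 hne hadm⟩
    exact (sum_franklin h0 hne hadm).trans (mem_distinctPartitions.1 hs).2
  · exact franklin_franklin h0 hne hadm

noncomputable def exceptions (N : ℕ) : Finset (Finset ℕ) :=
  (distinctPartitions N).filter fun s => ¬Admissible s

lemma signedSumMN_eq_sum_exceptions {N : ℕ} (hN : 0 < N) :
    signedSumMN N = ∑ s ∈ exceptions N, signedWeight s := by
  rw [signedSumMN_eq_sum_signedWeight, ← sum_filter_add_sum_filter_not _ Admissible,
    sum_signedWeight_admissible hN, zero_add, exceptions]

lemma not_admissible_Ico_self {r : ℕ} (hr : 0 < r) : ¬Admissible (Ico r (2 * r)) := by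
  rw [Admissible, smallestPart_Ico (by omega), topRun_Ico hr (by omega), sup_id_Ico (by omega)]
  omega

lemma not_admissible_Ico_succ {r : ℕ} (hr : 0 < r) :
    ¬Admissible (Ico (r + 1) (2 * r + 1)) := by
  rw [Admissible, smallestPart_Ico (by omega), topRun_Ico (by omega) (by omega),
    sup_id_Ico (by omega)]
  omega

lemma exists_eq_Ico_of_not_admissible (h0 : 0 ∉ s) (hne : s.Nonempty) (hs : ¬Admissible s) :
    ∃ r, 0 < r ∧ (s = Ico r (2 * r) ∨ s = Ico (r + 1) (2 * r + 1)) := by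
  have ha := smallestPart_pos h0 hne
  have ht := topRun_pos h0 hne
  have hrun := smallestPart_le (sup_add_one_sub_mem ht le_rfl)
  have hle := topRun_le_sup h0
  simp only [Admissible, not_or, not_and, not_le, not_lt] at hs
  rcases le_or_gt (smallestPart s) (topRun s) with h | h
  · have hm := hs.1 h
    refine ⟨smallestPart s, ha,
      .inl ((eq_Ico_of_sup_add_one_sub_topRun_le (by omega)).trans ?_)⟩
    congr 1
    omega
  · have hm := hs.2 h
    refine ⟨topRun s, ht, .inr ((eq_Ico_of_sup_add_one_sub_topRun_le (by omega)).trans ?_)⟩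
    congr 1 <;> omega

lemma mem_exceptions_iff {N : ℕ} (hN : 0 < N) :
    s ∈ exceptions N ↔ ∃ r : ℕ, 0 < r ∧ (N = pentagonal r ∧ s = Ico r (2 * r) ∨
      N = pentagonal (-r) ∧ s = Ico (r + 1) (2 * r + 1)) := by
  rw [exceptions, mem_filter]
  constructor
  · rintro ⟨hs, hadm⟩
    obtain ⟨h0, rfl⟩ := mem_distinctPartitions.1 hs
    obtain ⟨r, hr, rfl | rfl⟩ :=
      exists_eq_Ico_of_not_admissible h0 (nonempty_of_mem_distinctPartitions hN hs) hadm
    · exact ⟨r, hr, .inl ⟨sum_Ico_self_two_mul r, rfl⟩⟩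
    · exact ⟨r, hr, .inr ⟨sum_Ico_succ_two_mul_add_one r, rfl⟩⟩
  · rintro ⟨r, hr, ⟨rfl, rfl⟩ | ⟨rfl, rfl⟩⟩
    · exact ⟨mem_distinctPartitions.2 ⟨by simp, sum_Ico_self_two_mul r⟩,
        not_admissible_Ico_self hr⟩
    · exact ⟨mem_distinctPartitions.2 ⟨by simp, sum_Ico_succ_two_mul_add_one r⟩,
        not_admissible_Ico_succ hr⟩

lemma exceptions_pentagonal {r : ℕ} (hr : 0 < r) :
    exceptions (pentagonal r) = {Ico r (2 * r)} := by
  ext s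
  rw [mem_exceptions_iff (pentagonal_natCast_pos hr), mem_singleton]
  constructor
  · rintro ⟨r', -, ⟨h, rfl⟩ | ⟨h, rfl⟩⟩
    · obtain rfl : r = r' := by exact_mod_cast pentagonal_inj.1 h
      rfl
    · have := pentagonal_inj.1 h
      omega
  · rintro rfl
    exact ⟨r, hr, .inl ⟨rfl, rfl⟩⟩

lemma exceptions_pentagonal_neg {r : ℕ} (hr : 0 < r) :
    exceptions (pentagonal (-r)) = {Ico (r + 1) (2 * r + 1)} := by
  ext s
  rw [mem_exceptions_iff (pentagonal_neg_natCast_pos hr), mem_singleton]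
  constructor
  · rintro ⟨r', -, ⟨h, rfl⟩ | ⟨h, rfl⟩⟩
    · have := pentagonal_inj.1 h
      omega
    · obtain rfl : r = r' := by simpa using pentagonal_inj.1 h
      rfl
  · rintro rfl
    exact ⟨r, hr, .inr ⟨rfl, rfl⟩⟩

lemma exceptions_eq_empty {N : ℕ} (hN : 0 < N)
    (h : ∀ r : ℕ, 0 < r → N ≠ pentagonal r ∧ N ≠ pentagonal (-r)) :
    exceptions N = ∅ :=
  eq_empty_of_forall_notMem fun s hs => by
    obtain ⟨r, hr, ⟨hNr, -⟩ | ⟨hNr, -⟩⟩ := (mem_exceptions_iff hN).1 hs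
    · exact (h r hr).1 hNr
    · exact (h r hr).2 hNr

end Franklin

open Franklin in
/-- For every `N ≥ 1`, `Σ_{λ ∈ 𝒟_N} (-1)^{n_λ}(m_λ + n_λ)` equals `(-1)^r (3r-1)`
if `N = r(3r-1)/2` (i.e. `2N = 3r² - r`) for a positive integer `r`, equals
`(-1)^r · 3r` if `N = r(3r+1)/2` (i.e. `2N = 3r² + r`) for a positive integer `r`,
and equals `0` otherwise. -/
theorem signed_sum_m_plus_n (N : ℕ) (hN : 1 ≤ N) :
    (∀ r : ℕ, 0 < r → 2 * N = 3 * r * r - r →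
      signedSumMN N = (-1) ^ r * (3 * (r : ℤ) - 1)) ∧
    (∀ r : ℕ, 0 < r → 2 * N = 3 * r * r + r →
      signedSumMN N = (-1) ^ r * (3 * (r : ℤ))) ∧
    ((∀ r : ℕ, 0 < r → ¬(2 * N = 3 * r * r - r ∨ 2 * N = 3 * r * r + r)) →
      signedSumMN N = 0) := by
  rw [signedSumMN_eq_sum_exceptions hN]
  refine ⟨fun r hr h => ?_, fun r hr h => ?_, fun h => ?_⟩
  · rw [two_mul_eq_three_mul_mul_sub_iff.1 h, exceptions_pentagonal hr, sum_singleton,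
      signedWeight_Ico_self hr]
  · rw [two_mul_eq_three_mul_mul_add_iff.1 h, exceptions_pentagonal_neg hr, sum_singleton,
      signedWeight_Ico_succ hr]
  · have hpent (r : ℕ) (hr : 0 < r) : N ≠ pentagonal r ∧ N ≠ pentagonal (-r) :=
      ⟨fun e => h r hr (.inl (two_mul_eq_three_mul_mul_sub_iff.2 e)),
        fun e => h r hr (.inr (two_mul_eq_three_mul_mul_add_iff.2 e))⟩
    rw [exceptions_eq_empty hN hpent, sum_empty]
end

section
/- In the ring of formal power series in q with integer coefficients, −(q)_∞ · Σ_{k=1}^∞ q^k/(1 − q^k) = Σ_{λ ∈ 𝒟} (−1)^{n_λ} n_λ q^{N_λ}; equivalently, for every N ≥ 0, the coefficient of q^N in −(q)_∞ · Σ_{k=1}^∞ q^k/(1 − q^k) equals Σ_{λ ∈ 𝒟_N} (−1)^{n_λ} n_λ. -/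
/-!
Truncating both factors at degree `N`, the coefficient of `q^N` is that of
`-∏_{j ∈ S} (1 - q^j) · Σ_{k ∈ S} q^k/(1 - q^k)` with `S = {1, …, N}`. Since `q^k/(1 - q^k)`
cancels the factor `1 - q^k`, this series is `Σ_{k ∈ S} (-q^k) ∏_{j ∈ S, j ≠ k} (1 - q^j)`, the
derivative at `t = 1` of `∏_{j ∈ S} (1 - t q^j) = Σ_{T ⊆ S} (-t)^{|T|} q^{ΣT}`, which is
`Σ_{T ⊆ S} (-1)^{|T|} |T| q^{ΣT}`.
-/

open PowerSeries Finset

/-- For `k ≥ 1`, the series `q^k/(1 - q^k) = Σ_{j=1}^∞ q^{jk}`: its coefficient of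
`q^N` is `1` exactly when `N` is a positive multiple of `k`. -/
noncomputable def geomSeries (k : ℕ) : PowerSeries ℤ :=
  PowerSeries.mk fun N => if k ∣ N ∧ N ≠ 0 then 1 else 0

/-- The series `Σ_{k=1}^∞ q^k/(1 - q^k)`, defined coefficient-wise: only the terms
with `k ≤ N` contribute to the coefficient of `q^N`. -/
noncomputable def lambertSum : PowerSeries ℤ :=
  PowerSeries.mk fun N => ∑ k ∈ Finset.Icc 1 N, PowerSeries.coeff N (geomSeries k)

theorem Finset.sum_mul_prod_erase_one_add {ι R : Type*} [CommSemiring R] [DecidableEq ι]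
    (s : Finset ι) (f : ι → R) :
    ∑ i ∈ s, f i * ∏ j ∈ s.erase i, (1 + f j) = ∑ t ∈ s.powerset, #t • ∏ i ∈ t, f i := by
  open Polynomial in
  let P : R[X] := ∏ i ∈ s, (1 + Polynomial.C (f i) * Polynomial.X)
  have hP : P = ∑ t ∈ s.powerset, Polynomial.C (∏ i ∈ t, f i) * Polynomial.X ^ #t := by
    simp only [P, prod_one_add, prod_mul_distrib, prod_const, map_prod]
  have hd := congrArg (fun p => (derivative p).eval 1) hP
  simp only [P, derivative_prod_finset, derivative_sum, derivative_C_mul_X_pow, eval_finsetSum,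
    eval_mul, eval_prod, derivative_add, Polynomial.derivative_one, derivative_C_mul_X, eval_C,
    eval_add, eval_one, eval_X, eval_pow, mul_one, one_pow, zero_add] at hd
  simpa [mul_comm, nsmul_eq_mul] using hd

namespace PowerSeries

theorem coeff_mul_eq_of_coeff_eq {R : Type*} [Semiring R] {f f' g g' : R⟦X⟧} {N : ℕ}
    (hf : ∀ a ≤ N, coeff a f = coeff a f') (hg : ∀ b ≤ N, coeff b g = coeff b g') :
    coeff N (f * g) = coeff N (f' * g') := by
  simp only [coeff_mul]
  refine sum_congr rfl fun p hp => ?_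
  rw [hf p.1 (HasAntidiagonal.antidiagonal.fst_le hp),
    hg p.2 (HasAntidiagonal.antidiagonal.snd_le hp)]

theorem coeff_sum_C_mul_X_pow {ι R : Type*} [Semiring R] (s : Finset ι) (c : ι → R)
    (e : ι → ℕ) (n : ℕ) :
    coeff n (∑ i ∈ s, C (c i) * X ^ e i) = ∑ i ∈ s with e i = n, c i := by
  simp only [map_sum, coeff_C_mul_X_pow, sum_filter, eq_comm]

theorem prod_neg_X_pow {R : Type*} [CommRing R] (t : Finset ℕ) :
    ∏ j ∈ t, (-X ^ j : R⟦X⟧) = C ((-1) ^ #t) * X ^ t.sum id := by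
  simp only [neg_eq_neg_one_mul (X ^ _), prod_mul_distrib, prod_const, map_pow, map_neg, map_one]
  rw [prod_pow_eq_pow_sum]
  rfl

end PowerSeries

theorem coeff_qPoch_of_le {a M N : ℕ} (haM : a ≤ M) (hMN : M ≤ N) :
    coeff a (qPoch N) = coeff a (qPoch M) := by
  induction N, hMN using Nat.le_induction with
  | base => rfl
  | succ n _ ih =>
    rw [qPoch, prod_range_succ, ← qPoch, mul_sub, mul_one, map_sub, coeff_mul_X_pow',
      if_neg (by omega), sub_zero, ih]

theorem coeff_eulerProd_of_le {a N : ℕ} (h : a ≤ N) :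
    coeff a eulerProd = coeff a (qPoch N) := by
  rw [eulerProd, coeff_mk, coeff_qPoch_of_le le_rfl h]

theorem qPoch_eq_prod_Icc (N : ℕ) : qPoch N = ∏ j ∈ Icc 1 N, (1 - (X : ℤ⟦X⟧) ^ j) := by
  rw [qPoch, ← Ico_add_one_right_eq_Icc, prod_Ico_eq_prod_range]
  simp only [add_comm, add_tsub_cancel_right]

theorem coeff_geomSeries_of_lt {k n : ℕ} (h : n < k) : coeff n (geomSeries k) = 0 := by
  rw [geomSeries, coeff_mk, if_neg]
  rintro ⟨hdvd, hn⟩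
  exact absurd (Nat.le_of_dvd (Nat.pos_of_ne_zero hn) hdvd) (not_le.mpr h)

theorem coeff_lambertSum_of_le {b N : ℕ} (h : b ≤ N) :
    coeff b lambertSum = coeff b (∑ k ∈ Icc 1 N, geomSeries k) := by
  rw [lambertSum, coeff_mk, map_sum]
  refine sum_subset (Icc_subset_Icc_right h) fun k hkN hkb => coeff_geomSeries_of_lt ?_
  simp only [mem_Icc] at hkN hkb
  omega

theorem geomSeries_mul_one_sub_X_pow {k : ℕ} (hk : 0 < k) :
    geomSeries k * (1 - X ^ k) = X ^ k := by
  ext n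
  rw [mul_sub, mul_one, map_sub, coeff_mul_X_pow', coeff_X_pow]
  rcases lt_or_ge n k with h | h
  · rw [coeff_geomSeries_of_lt h, if_neg h.not_ge, if_neg h.ne, sub_zero]
  · obtain ⟨m, rfl⟩ := Nat.exists_eq_add_of_le' h
    simp only [geomSeries, coeff_mk, Nat.dvd_add_self_right, if_pos h, add_tsub_cancel_right,
      add_eq_right]
    by_cases hm : m = 0 <;> simp [hm, hk.ne']

theorem prod_one_sub_X_pow_mul_geomSeries {S : Finset ℕ} {k : ℕ} (hkS : k ∈ S) (hk : 0 < k) :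
    (∏ j ∈ S, (1 - X ^ j)) * geomSeries k = X ^ k * ∏ j ∈ S.erase k, (1 - X ^ j) := by
  calc (∏ j ∈ S, (1 - X ^ j)) * geomSeries k
      = geomSeries k * (1 - X ^ k) * ∏ j ∈ S.erase k, (1 - X ^ j) := by
        rw [← mul_prod_erase S _ hkS]; ring
    _ = X ^ k * ∏ j ∈ S.erase k, (1 - X ^ j) := by rw [geomSeries_mul_one_sub_X_pow hk]

theorem neg_prod_one_sub_X_pow_mul_sum_geomSeries {S : Finset ℕ} (hS : ∀ k ∈ S, 0 < k) :
    -((∏ j ∈ S, (1 - X ^ j)) * ∑ k ∈ S, geomSeries k)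
      = ∑ t ∈ S.powerset, C ((-1 : ℤ) ^ #t * #t) * X ^ t.sum id := by
  calc -((∏ j ∈ S, (1 - X ^ j)) * ∑ k ∈ S, geomSeries k)
      = ∑ k ∈ S, -X ^ k * ∏ j ∈ S.erase k, (1 + -X ^ j) := by
        simp only [mul_sum, ← sum_neg_distrib, ← sub_eq_add_neg, neg_mul]
        exact sum_congr rfl fun k hk => by rw [prod_one_sub_X_pow_mul_geomSeries hk (hS k hk)]
    _ = ∑ t ∈ S.powerset, #t • ∏ j ∈ t, (-X ^ j) := sum_mul_prod_erase_one_add S _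
    _ = ∑ t ∈ S.powerset, C ((-1 : ℤ) ^ #t * #t) * X ^ t.sum id := by
        refine sum_congr rfl fun t _ => ?_
        rw [prod_neg_X_pow, nsmul_eq_mul, map_mul, map_natCast]
        ring

/-- `-(q)_∞ · Σ_{k=1}^∞ q^k/(1-q^k) = Σ_{λ ∈ 𝒟} (-1)^{n_λ} n_λ q^{N_λ}`: for every
`N ≥ 0`, the coefficient of `q^N` in `-(q)_∞ · Σ_{k=1}^∞ q^k/(1-q^k)` equals
`Σ_{λ ∈ 𝒟_N} (-1)^{n_λ} n_λ`, where `n_λ = s.card` is the number of parts. -/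
theorem neg_eulerProd_mul_lambertSum_coeff (N : ℕ) :
    PowerSeries.coeff N (-(eulerProd * lambertSum))
      = ∑ s ∈ distinctPartitions N, (-1 : ℤ) ^ s.card * (s.card : ℤ) := by
  have htrunc : coeff N (eulerProd * lambertSum)
      = coeff N (qPoch N * ∑ k ∈ Icc 1 N, geomSeries k) :=
    coeff_mul_eq_of_coeff_eq (fun _ => coeff_eulerProd_of_le) (fun _ => coeff_lambertSum_of_le)
  rw [map_neg, htrunc, ← map_neg, qPoch_eq_prod_Icc,
    neg_prod_one_sub_X_pow_mul_sum_geomSeries fun k hk => (mem_Icc.mp hk).1,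
    coeff_sum_C_mul_X_pow]
  rfl
end

section
/- The series T(x) = 1 + Σ_{r=1}^∞ (−1)^r [x^{3r−1} q^{r(3r−1)/2} + x^{3r} q^{r(3r+1)/2}] ∈ ℤ⟦x, q⟧ satisfies the functional equation T(x) = 1 − q x² − q² x³ T(qx), where T(qx) denotes the series obtained from T(x) by substituting qx for x. -/
open PowerSeries Finset

/-- `ℤ⟦x,q⟧`, realized as `(ℤ⟦q⟧)⟦x⟧`. -/
abbrev Zxq : Type := PowerSeries (PowerSeries ℤ)

/-- The variable `x`. -/
noncomputable def xv : Zxq := PowerSeries.X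

/-- The variable `q`. -/
noncomputable def qv : Zxq := PowerSeries.C (PowerSeries.X : PowerSeries ℤ)

/-- `T(x) = 1 + Σ_{r=1}^∞ (-1)^r [x^{3r-1} q^{r(3r-1)/2} + x^{3r} q^{r(3r+1)/2}]`,
defined by its coefficient of `x^a`: the `r`-th term is divisible by `x^{3r-1}`, so
only terms with `r ≤ a` contribute. -/
noncomputable def pentagonalXqSeries : Zxq :=
  PowerSeries.mk fun a =>
    (if a = 0 then 1 else 0) +
      ∑ r ∈ Finset.Icc 1 a, (-1 : PowerSeries ℤ) ^ r *
        ((if a = 3 * r - 1 then (PowerSeries.X : PowerSeries ℤ) ^ (r * (3 * r - 1) / 2) else 0) +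
         (if a = 3 * r then (PowerSeries.X : PowerSeries ℤ) ^ (r * (3 * r + 1) / 2) else 0))

/-! The coefficient of `x^a` in `T` gets a contribution only from the summand with `a = 3r - 1`
or `a = 3r`, so the coefficients of `T` are explicit, and in the coefficient of `x^{a+3}` the
functional equation becomes `t_{a+3} = -q^{a+2} t_a`. Going from `r` to `r + 1` this is the
growth of the pentagonal numbers: `(r+1)(3r+4)/2 = r(3r+1)/2 + (3r+2)` and
`(r+2)(3r+5)/2 = (r+1)(3r+2)/2 + (3r+4)`. -/

lemma coeff_pentagonalXqSeries_three_mul (r : ℕ) :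
    coeff (3 * r) pentagonalXqSeries = (-1) ^ r * X ^ (r * (3 * r + 1) / 2) := by
  rcases Nat.eq_zero_or_pos r with rfl | hr
  · simp [pentagonalXqSeries]
  rw [pentagonalXqSeries, coeff_mk, if_neg (by omega), zero_add,
    sum_eq_single_of_mem r (by simp; omega)]
  · rw [if_neg (by omega), if_pos rfl, zero_add]
  · intro s _ hs
    rw [if_neg (by omega), if_neg (by omega), add_zero, mul_zero]

lemma coeff_pentagonalXqSeries_three_mul_add_one (r : ℕ) :
    coeff (3 * r + 1) pentagonalXqSeries = 0 := by
  rw [pentagonalXqSeries, coeff_mk, if_neg (by omega), zero_add]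
  refine sum_eq_zero fun s _ => ?_
  rw [if_neg (by omega), if_neg (by omega), add_zero, mul_zero]

lemma coeff_pentagonalXqSeries_three_mul_add_two (r : ℕ) :
    coeff (3 * r + 2) pentagonalXqSeries = (-1) ^ (r + 1) * X ^ ((r + 1) * (3 * r + 2) / 2) := by
  rw [pentagonalXqSeries, coeff_mk, if_neg (by omega), zero_add,
    sum_eq_single_of_mem (r + 1) (by simp; omega)]
  · rw [if_pos (by omega), if_neg (by omega), add_zero, show 3 * (r + 1) - 1 = 3 * r + 2 by omega]
  · intro s _ hs
    rw [if_neg (by omega), if_neg (by omega), add_zero, mul_zero]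

lemma coeff_pentagonalXqSeries_add_three (a : ℕ) :
    coeff (a + 3) pentagonalXqSeries = -(X ^ (a + 2) * coeff a pentagonalXqSeries) := by
  obtain ⟨r, rfl | rfl | rfl⟩ : ∃ r, a = 3 * r ∨ a = 3 * r + 1 ∨ a = 3 * r + 2 :=
    ⟨a / 3, by omega⟩
  · rw [show 3 * r + 3 = 3 * (r + 1) by ring, coeff_pentagonalXqSeries_three_mul,
      coeff_pentagonalXqSeries_three_mul,
      show (r + 1) * (3 * (r + 1) + 1) = r * (3 * r + 1) + 2 * (3 * r + 2) by ring,
      Nat.add_mul_div_left _ _ two_pos]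
    ring
  · rw [show 3 * r + 1 + 3 = 3 * (r + 1) + 1 by ring, coeff_pentagonalXqSeries_three_mul_add_one,
      coeff_pentagonalXqSeries_three_mul_add_one, mul_zero, neg_zero]
  · rw [show 3 * r + 2 + 3 = 3 * (r + 1) + 2 by ring, coeff_pentagonalXqSeries_three_mul_add_two,
      coeff_pentagonalXqSeries_three_mul_add_two,
      show (r + 1 + 1) * (3 * (r + 1) + 2) = (r + 1) * (3 * r + 2) + 2 * (3 * r + 4) by ring,
      Nat.add_mul_div_left _ _ two_pos]
    ring

/-- `T(x) = 1 - q x² - q² x³ T(qx)`, where `T(qx)` is obtained by substituting `qx` for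
`x`, i.e. by `rescale q` on `(ℤ⟦q⟧)⟦x⟧` (which multiplies the coefficient of `x^n` by `q^n`). -/
theorem pentagonalXqSeries_functional_equation :
    pentagonalXqSeries = 1 - qv * xv ^ 2 - qv ^ 2 * xv ^ 3 *
      PowerSeries.rescale (PowerSeries.X : PowerSeries ℤ) pentagonalXqSeries := by
  have hshift : qv ^ 2 * xv ^ 3 * rescale X pentagonalXqSeries =
      X ^ 3 * (C (X ^ 2) * rescale X pentagonalXqSeries) := by
    simp only [qv, xv, map_pow]
    ring
  refine PowerSeries.ext fun n => ?_
  rw [hshift, map_sub, map_sub, coeff_one, qv, xv, coeff_C_mul_X_pow, coeff_X_pow_mul']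
  rcases n with _ | _ | _ | a
  · simpa using coeff_pentagonalXqSeries_three_mul 0
  · simpa using coeff_pentagonalXqSeries_three_mul_add_one 0
  · simpa using coeff_pentagonalXqSeries_three_mul_add_two 0
  · rw [coeff_pentagonalXqSeries_add_three, if_neg (by omega), if_neg (by omega),
      if_pos (by omega), show a + 1 + 1 + 1 - 3 = a by omega, coeff_C_mul, coeff_rescale]
    ring
end
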